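/- arXiv:1105.2595 — 7 statements merged into one kernel-verified Lean document; each statement's English description precedes it below -/
import Mathlib

section
/- Assume c₁/δ₁ > c₂/δ₂, u₁/δ₁ ≥ u₂/δ₂ and u₂ ≥ 0 (hence u₁ ≥ 0). Then for every t > 0, U₁(t)/δ₁ > U₂(t)/δ₂; consequently inf{t ≥ 0 : min(U₁(t),U₂(t)) < 0} = inf{t ≥ 0 : U₂(t) < 0} and inf{t ≥ 0 : max(U₁(t),U₂(t)) < 0} = inf{t ≥ 0 : U₁(t) < 0} (with the convention inf ∅ = +∞). -/
open MeasureTheory Filter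

/-- If `c₁/δ₁ > c₂/δ₂`, `u₁/δ₁ ≥ u₂/δ₂` and `u₂ ≥ 0`, then
`U₁ t / δ₁ > U₂ t / δ₂` for every `t > 0`; consequently the joint ruin time
`T_min` coincides with the ruin time of `U₂` and `T_max` with that of `U₁`
(infima taken in `ℝ≥0∞`, so that `inf ∅ = +∞`). -/
theorem stmt_3 (r δ₁ δ₂ c₁ c₂ u₁ u₂ : ℝ) (hr : 0 < r) (hδ₁ : 0 < δ₁) (hδ₂ : 0 < δ₂)
    (A : ℝ → ℝ) (hA0 : A 0 = 0)
    (U₁ U₂ : ℝ → ℝ)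
    (hU₁ : ∀ t, U₁ t = Real.exp (r * t) * u₁ + (c₁ / r) * (Real.exp (r * t) - 1) - δ₁ * A t)
    (hU₂ : ∀ t, U₂ t = Real.exp (r * t) * u₂ + (c₂ / r) * (Real.exp (r * t) - 1) - δ₂ * A t)
    (hc : c₁ / δ₁ > c₂ / δ₂) (hu : u₁ / δ₁ ≥ u₂ / δ₂) (hu₂ : 0 ≤ u₂) :
    (∀ t > (0 : ℝ), U₁ t / δ₁ > U₂ t / δ₂)
    ∧ (⨅ (t : ℝ) (_ : 0 ≤ t ∧ min (U₁ t) (U₂ t) < 0), (ENNReal.ofReal t))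
        = (⨅ (t : ℝ) (_ : 0 ≤ t ∧ U₂ t < 0), (ENNReal.ofReal t))
    ∧ (⨅ (t : ℝ) (_ : 0 ≤ t ∧ max (U₁ t) (U₂ t) < 0), (ENNReal.ofReal t))
        = (⨅ (t : ℝ) (_ : 0 ≤ t ∧ U₁ t < 0), (ENNReal.ofReal t)) := by
  have hu' : u₂ * δ₁ ≤ u₁ * δ₂ := (div_le_div_iff₀ hδ₂ hδ₁).mp hu
  have hc' : c₂ * δ₁ < c₁ * δ₂ := (div_lt_div_iff₀ hδ₂ hδ₁).mp hc
  have hu₁ : 0 ≤ u₁ := by nlinarith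
  have hU₁0 : U₁ 0 = u₁ := by simp [hU₁, hA0]
  have hU₂0 : U₂ 0 = u₂ := by simp [hU₂, hA0]
  have key : ∀ t > (0 : ℝ), U₁ t / δ₁ > U₂ t / δ₂ := by
    intro t ht
    rw [hU₁, hU₂, gt_iff_lt, div_lt_div_iff₀ hδ₂ hδ₁]
    have hE : 1 < Real.exp (r * t) := by nlinarith [Real.add_one_le_exp (r * t), mul_pos hr ht]
    have h1 : Real.exp (r * t) * u₂ * δ₁ ≤ Real.exp (r * t) * u₁ * δ₂ := by nlinarith
    have h2 : (c₂ / r) * (Real.exp (r * t) - 1) * δ₁ < (c₁ / r) * (Real.exp (r * t) - 1) * δ₂ := by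
      rw [div_mul_eq_mul_div, div_mul_eq_mul_div, div_mul_eq_mul_div, div_mul_eq_mul_div,
        div_lt_div_iff₀ hr hr]
      nlinarith [mul_pos (mul_pos (sub_pos.mpr hc') (sub_pos.mpr hE)) hr]
    nlinarith
  refine ⟨key, ?_, ?_⟩
  · have h1 : ∀ t : ℝ, (0 ≤ t ∧ min (U₁ t) (U₂ t) < 0) ↔ (0 ≤ t ∧ U₂ t < 0) := by
      intro t
      constructor
      · rintro ⟨ht, hm⟩
        refine ⟨ht, ?_⟩
        rcases ht.eq_or_lt with h | h
        · exfalso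
          rw [← h, hU₁0, hU₂0] at hm
          rcases min_lt_iff.mp hm with h' | h' <;> linarith
        · rcases min_lt_iff.mp hm with h' | h'
          · have := key t h
            have : U₂ t / δ₂ < 0 := lt_trans this (div_neg_of_neg_of_pos h' hδ₁)
            exact (div_neg_iff.mp this).resolve_left (fun h => absurd h.2 (not_lt.mpr hδ₂.le)) |>.1
          · exact h'
      · rintro ⟨ht, h'⟩
        exact ⟨ht, min_lt_iff.mpr (Or.inr h')⟩
    simp only [h1]
  · have h2 : ∀ t : ℝ, (0 ≤ t ∧ max (U₁ t) (U₂ t) < 0) ↔ (0 ≤ t ∧ U₁ t < 0) := by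
      intro t
      constructor
      · rintro ⟨ht, hm⟩
        exact ⟨ht, lt_of_le_of_lt (le_max_left _ _) hm⟩
      · rintro ⟨ht, h'⟩
        refine ⟨ht, ?_⟩
        rcases ht.eq_or_lt with h | h
        · exfalso; rw [← h, hU₁0] at h'; linarith
        · have := key t h
          have hne : U₂ t / δ₂ < 0 := lt_trans this (div_neg_of_neg_of_pos h' hδ₁)
          have hU2 : U₂ t < 0 :=
            ((div_neg_iff.mp hne).resolve_left (fun h => absurd h.2 (not_lt.mpr hδ₂.le))).1
          exact max_lt h' hU2
    simp only [h2]
end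

section
/- For every u₁ ≥ 0 and s > 0, the boundary condition holds: Ψ_min(u₁, (δ₂/δ₁)u₁, s) = E[e^{−s τ₂} 1_{τ₂ < ∞}], where τ₂ = inf{t ≥ 0 : U₂(t) < 0} is the ruin time of the second risk process started from the initial reserve u₂ = (δ₂/δ₁)u₁. -/
open MeasureTheory Filter ProbabilityTheory
open scoped ENNReal

/-- boundary condition of Theorem 2.1: for every `u₁ ≥ 0` and `s > 0`,
`Ψ_min(u₁, (δ₂/δ₁)u₁, s) = E[e^{-s τ₂} 1_{τ₂ < ∞}]`, where `τ₂` is the ruin time of the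
second risk process started from the initial reserve `u₂ = (δ₂/δ₁)u₁`. -/
theorem stmt_6 {Ω : Type*} [MeasurableSpace Ω] (P : Measure Ω) [IsProbabilityMeasure P]
    (r lam c₁ c₂ δ₁ δ₂ : ℝ) (hr : 0 < r) (hlam : 0 < lam)
    (hc₁ : 0 < c₁) (hc₂ : 0 < c₂)
    (hδ₁ : δ₁ ∈ Set.Ioo (0 : ℝ) 1) (hδ₂ : δ₂ ∈ Set.Ioo (0 : ℝ) 1)
    (hδsum : δ₁ + δ₂ = 1) (hcδ : c₁ / δ₁ > c₂ / δ₂)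
    -- the inter-arrival times and the claim sizes
    (T σ : ℕ → Ω → ℝ)
    (hTmeas : ∀ k, Measurable (T k)) (hσmeas : ∀ k, Measurable (σ k))
    -- the two sequences together form an independent family
    (hindep : iIndepFun (Sum.elim T σ) P)
    -- each `T k` is exponentially distributed with parameter `lam`
    (hTexp : ∀ k, Measure.map (T k) P
      = volume.withDensity (fun x => ENNReal.ofReal
          (if 0 ≤ x then lam * Real.exp (-(lam * x)) else 0)))
    -- the claim sizes are strictly positive with common density `f` on `(0,∞)`
    (f : ℝ → ℝ) (hfmeas : Measurable f) (hfnonneg : ∀ z, 0 ≤ f z)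
    (hfsupp : ∀ z ≤ (0 : ℝ), f z = 0)
    (hσpos : ∀ k ω, 0 < σ k ω)
    (hσdist : ∀ k, Measure.map (σ k) P
      = volume.withDensity (fun z => ENNReal.ofReal (f z)))
    -- the claim arrival times
    (θ : ℕ → Ω → ℝ) (hθ : ∀ k ω, θ k ω = ∑ i ∈ Finset.range (k + 1), T i ω)
    -- the risk reserve process started from initial reserve `v` with premium rate `c`
    -- and weight `δ`
    (U : ℝ → ℝ → ℝ → ℝ → Ω → ℝ)
    (hU : ∀ v c δ t ω, U v c δ t ω
      = Real.exp (r * t) * v + (c / r) * (Real.exp (r * t) - 1)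
        - δ * ∑' k : ℕ, if θ k ω ≤ t then Real.exp (r * (t - θ k ω)) * σ k ω else 0)
    -- the joint ruin time `T_min` (valued in `ℝ≥0∞`, with `inf ∅ = ∞`)
    (Tmin : ℝ → ℝ → Ω → ℝ≥0∞)
    (hTmin : ∀ v₁ v₂ ω, Tmin v₁ v₂ ω
      = ⨅ (t : ℝ) (_ : 0 ≤ t ∧ min (U v₁ c₁ δ₁ t ω) (U v₂ c₂ δ₂ t ω) < 0),
          (ENNReal.ofReal t))
    -- its Laplace transform
    (s : ℝ) (hs : 0 < s)
    (Ψ : ℝ → ℝ → ℝ)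
    (hΨ : ∀ v₁ v₂, Ψ v₁ v₂
      = ∫ ω, (if Tmin v₁ v₂ ω < ⊤
          then Real.exp (-s * (Tmin v₁ v₂ ω).toReal) else 0) ∂P)
    -- the ruin time of the second risk process started from initial reserve `v₂`
    (tau₂ : ℝ → Ω → ℝ≥0∞)
    (htau₂ : ∀ v₂ ω, tau₂ v₂ ω
      = ⨅ (t : ℝ) (_ : 0 ≤ t ∧ U v₂ c₂ δ₂ t ω < 0), (ENNReal.ofReal t)) :
    ∀ u₁ ≥ (0 : ℝ),
      Ψ u₁ ((δ₂ / δ₁) * u₁)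
        = ∫ ω, (if tau₂ ((δ₂ / δ₁) * u₁) ω < ⊤
            then Real.exp (-s * (tau₂ ((δ₂ / δ₁) * u₁) ω).toReal) else 0) ∂P := by
  intro u₁ hu₁
  have hd1 : (0:ℝ) < δ₁ := hδ₁.1
  have hd2 : (0:ℝ) < δ₂ := hδ₂.1
  have key : ∀ ω, Tmin u₁ ((δ₂ / δ₁) * u₁) ω = tau₂ ((δ₂ / δ₁) * u₁) ω := by
    intro ω
    rw [hTmin, htau₂]
    refine iInf_congr fun t => ?_
    refine iInf_congr_Prop (and_congr_right fun ht => ?_) (fun _ => rfl)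
    constructor
    · intro hmin
      rcases min_lt_iff.mp hmin with h1 | h2
      · by_contra h2
        push_neg at h2
        -- U₁ ≥ (δ₁/δ₂) U₂ ≥ 0, contradiction
        have hdiff : U u₁ c₁ δ₁ t ω - (δ₁ / δ₂) * U ((δ₂ / δ₁) * u₁) c₂ δ₂ t ω
            = ((c₁ - (δ₁ / δ₂) * c₂) / r) * (Real.exp (r * t) - 1) := by
          rw [hU, hU]
          field_simp
          ring
        have hcpos : δ₁ / δ₂ * c₂ < c₁ := by
          have := (div_lt_div_iff₀ hd2 hd1).mp hcδ
          rw [div_mul_eq_mul_div, div_lt_iff₀ hd2]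
          nlinarith
        have hexp : (0:ℝ) ≤ Real.exp (r * t) - 1 := by
          have : (1:ℝ) ≤ Real.exp (r * t) := by
            rw [← Real.exp_zero]
            exact Real.exp_le_exp.mpr (by positivity)
          linarith
        have h3 : (0:ℝ) ≤ U u₁ c₁ δ₁ t ω := by
          have h4 : (0:ℝ) ≤ (δ₁ / δ₂) * U ((δ₂ / δ₁) * u₁) c₂ δ₂ t ω := by
            positivity
          have h5 : (0:ℝ) ≤ (c₁ - δ₁ / δ₂ * c₂) / r * (Real.exp (r * t) - 1) :=
            mul_nonneg (div_nonneg (by linarith) hr.le) hexp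
          linarith
        linarith
      · exact h2
    · intro h2
      exact min_lt_iff.mpr (Or.inr h2)
  rw [hΨ]
  refine integral_congr_ae (Filter.Eventually.of_forall fun ω => ?_)
  simp only [key]
end

section
/- For every u₁ ≥ 0 and s > 0, the boundary condition holds: Ψ_max(u₁, (δ₂/δ₁)u₁, s) = E[e^{−s τ₁} 1_{τ₁ < ∞}], where τ₁ = inf{t ≥ 0 : U₁(t) < 0} is the ruin time first risk process started from the initial reserve u₁. -/
open MeasureTheory Filter ProbabilityTheory
open scoped ENNReal

/-- boundary condition of Theorem 2.2: for every `u₁ ≥ 0` and `s > 0`,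
`Ψ_max(u₁, (δ₂/δ₁)u₁, s) = E[e^{-s τ₁} 1_{τ₁ < ∞}]`, where `τ₁` is the ruin time of the
first risk process started from the initial reserve `u₁`. -/
theorem stmt_8 {Ω : Type*} [MeasurableSpace Ω] (P : Measure Ω) [IsProbabilityMeasure P]
    (r lam c₁ c₂ δ₁ δ₂ : ℝ) (hr : 0 < r) (hlam : 0 < lam)
    (hc₁ : 0 < c₁) (hc₂ : 0 < c₂)
    (hδ₁ : δ₁ ∈ Set.Ioo (0 : ℝ) 1) (hδ₂ : δ₂ ∈ Set.Ioo (0 : ℝ) 1)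
    (hδsum : δ₁ + δ₂ = 1) (hcδ : c₁ / δ₁ > c₂ / δ₂)
    -- the inter-arrival times and the claim sizes
    (T σ : ℕ → Ω → ℝ)
    (hTmeas : ∀ k, Measurable (T k)) (hσmeas : ∀ k, Measurable (σ k))
    -- the two sequences together form an independent family
    (hindep : iIndepFun (Sum.elim T σ) P)
    -- each `T k` is exponentially distributed with parameter `lam`
    (hTexp : ∀ k, Measure.map (T k) P
      = volume.withDensity (fun x => ENNReal.ofReal
          (if 0 ≤ x then lam * Real.exp (-(lam * x)) else 0)))
    -- the claim sizes are strictly positive with common density `f` on `(0,∞)`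
    (f : ℝ → ℝ) (hfmeas : Measurable f) (hfnonneg : ∀ z, 0 ≤ f z)
    (hfsupp : ∀ z ≤ (0 : ℝ), f z = 0)
    (hσpos : ∀ k ω, 0 < σ k ω)
    (hσdist : ∀ k, Measure.map (σ k) P
      = volume.withDensity (fun z => ENNReal.ofReal (f z)))
    -- the claim arrival times
    (θ : ℕ → Ω → ℝ) (hθ : ∀ k ω, θ k ω = ∑ i ∈ Finset.range (k + 1), T i ω)
    -- the risk reserve process started from initial reserve `v` with premium rate `c`
    -- and weight `δ`
    (U : ℝ → ℝ → ℝ → ℝ → Ω → ℝ)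
    (hU : ∀ v c δ t ω, U v c δ t ω
      = Real.exp (r * t) * v + (c / r) * (Real.exp (r * t) - 1)
        - δ * ∑' k : ℕ, if θ k ω ≤ t then Real.exp (r * (t - θ k ω)) * σ k ω else 0)
    -- the joint ruin time `T_max` (valued in `ℝ≥0∞`, with `inf ∅ = ∞`)
    (Tmax : ℝ → ℝ → Ω → ℝ≥0∞)
    (hTmax : ∀ v₁ v₂ ω, Tmax v₁ v₂ ω
      = ⨅ (t : ℝ) (_ : 0 ≤ t ∧ max (U v₁ c₁ δ₁ t ω) (U v₂ c₂ δ₂ t ω) < 0),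
          (ENNReal.ofReal t))
    -- its Laplace transform
    (s : ℝ) (hs : 0 < s)
    (Ψ : ℝ → ℝ → ℝ)
    (hΨ : ∀ v₁ v₂, Ψ v₁ v₂
      = ∫ ω, (if Tmax v₁ v₂ ω < ⊤
          then Real.exp (-s * (Tmax v₁ v₂ ω).toReal) else 0) ∂P)
    -- the ruin time of the first risk process started from initial reserve `v₁`
    (tau₁ : ℝ → Ω → ℝ≥0∞)
    (htau₁ : ∀ v₁ ω, tau₁ v₁ ω
      = ⨅ (t : ℝ) (_ : 0 ≤ t ∧ U v₁ c₁ δ₁ t ω < 0), (ENNReal.ofReal t)) :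
    ∀ u₁ ≥ (0 : ℝ),
      Ψ u₁ ((δ₂ / δ₁) * u₁)
        = ∫ ω, (if tau₁ u₁ ω < ⊤
            then Real.exp (-s * (tau₁ u₁ ω).toReal) else 0) ∂P := by
  intro u₁ hu₁
  have hd1 := hδ₁.1
  have hd2 := hδ₂.1
  have hc : c₂ * δ₁ < c₁ * δ₂ := by
    rw [gt_iff_lt, div_lt_div_iff₀ hd2 hd1] at hcδ; linarith
  have hkey : ∀ ω, Tmax u₁ ((δ₂ / δ₁) * u₁) ω = tau₁ u₁ ω := by
    intro ω
    rw [hTmax, htau₁]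
    refine iInf_congr fun t => ?_
    refine iInf_congr_Prop ?_ fun _ => rfl
    constructor
    · rintro ⟨ht, hmax⟩; exact ⟨ht, (max_lt_iff.mp hmax).1⟩
    · rintro ⟨ht, h1⟩
      refine ⟨ht, max_lt h1 ?_⟩
      rw [hU] at h1 ⊢
      set S : ℝ := ∑' k : ℕ, if θ k ω ≤ t then Real.exp (r * (t - θ k ω)) * σ k ω else 0
      set E : ℝ := Real.exp (r * t) with hE
      have hE1 : 1 ≤ E := Real.one_le_exp (mul_nonneg hr.le ht)
      have hdd : E * (δ₂ / δ₁ * u₁) = δ₂ / δ₁ * (E * u₁) := by ring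
      have hcr : δ₁ * (c₂ / r) ≤ δ₂ * (c₁ / r) := by
        rw [mul_div_assoc', mul_div_assoc']
        exact div_le_div_of_nonneg_right (by nlinarith) hr.le
      have hmul : δ₁ * (E * (δ₂ / δ₁ * u₁) + c₂ / r * (E - 1) - δ₂ * S)
          - δ₂ * (E * u₁ + c₁ / r * (E - 1) - δ₁ * S)
          = (E - 1) * (δ₁ * (c₂ / r) - δ₂ * (c₁ / r)) := by
        field_simp
        ring
      have h2 : δ₁ * (E * (δ₂ / δ₁ * u₁) + c₂ / r * (E - 1) - δ₂ * S) < 0 := by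
        nlinarith [mul_nonneg (sub_nonneg.mpr hE1) (sub_nonneg.mpr hcr),
          mul_pos hd2 (neg_pos.mpr h1)]
      nlinarith [h2]
  rw [hΨ]
  exact integral_congr_ae (Filter.Eventually.of_forall fun ω => by simp only [hkey])
end

section
/- For all bounded measurable g₁, g₂ : ℝ² → ℝ, one has sup_{(u₁,u₂)∈ℝ²} |(𝒯g₁)(u₁,u₂) − (𝒯g₂)(u₁,u₂)| ≤ ((λ + s e^{−(λ+s)h})/(λ + s)) · sup_{(u₁,u₂)∈ℝ²} |g₁(u₁,u₂) − g₂(u₁,u₂)|, and the contraction constant satisfies (λ + s e^{−(λ+s)h})/(λ + s) < 1. -/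
open MeasureTheory Filter

/-- contraction estimate for the renewal operator `𝒯` of the uniqueness
part of Theorem 2.1: for all bounded measurable `g₁ g₂ : ℝ² → ℝ`,
`sup |𝒯g₁ - 𝒯g₂| ≤ ((λ + s e^{-(λ+s)h})/(λ+s)) sup |g₁ - g₂|`, and the contraction
constant is `< 1`. -/
theorem stmt_9 (r lam s h c₁ c₂ δ₁ δ₂ : ℝ)
    (hr : 0 < r) (hlam : 0 < lam) (hs : 0 < s) (hh : 0 < h)
    (hc₁ : 0 < c₁) (hc₂ : 0 < c₂)
    (hδ₁ : δ₁ ∈ Set.Ioo (0 : ℝ) 1) (hδ₂ : δ₂ ∈ Set.Ioo (0 : ℝ) 1) (hδsum : δ₁ + δ₂ = 1)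
    (f : ℝ → ℝ) (hfmeas : Measurable f) (hfnonneg : ∀ z, 0 ≤ f z)
    (hfint : ∫ z in Set.Ioi (0 : ℝ), f z = 1)
    (𝒯 : (ℝ → ℝ → ℝ) → ℝ → ℝ → ℝ)
    (h𝒯 : ∀ (g : ℝ → ℝ → ℝ) (u₁ u₂ : ℝ), 𝒯 g u₁ u₂
      = Real.exp (-((lam + s) * h))
          * g (Real.exp (r * h) * u₁ + (c₁ / r) * (Real.exp (r * h) - 1))
              (Real.exp (r * h) * u₂ + (c₂ / r) * (Real.exp (r * h) - 1))
        + ∫ t in (0 : ℝ)..h, lam * Real.exp (-((lam + s) * t))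
            * ∫ z in Set.Ioi (0 : ℝ),
                g (Real.exp (r * t) * u₁ + (c₁ / r) * (Real.exp (r * t) - 1) - δ₁ * z)
                  (Real.exp (r * t) * u₂ + (c₂ / r) * (Real.exp (r * t) - 1) - δ₂ * z)
                * f z) :
    (∀ g₁ g₂ : ℝ → ℝ → ℝ,
      Measurable (fun p : ℝ × ℝ => g₁ p.1 p.2) → Measurable (fun p : ℝ × ℝ => g₂ p.1 p.2) →
      (∃ C₁, ∀ u₁ u₂, |g₁ u₁ u₂| ≤ C₁) → (∃ C₂, ∀ u₁ u₂, |g₂ u₁ u₂| ≤ C₂) →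
      (⨆ p : ℝ × ℝ, |𝒯 g₁ p.1 p.2 - 𝒯 g₂ p.1 p.2|)
        ≤ ((lam + s * Real.exp (-((lam + s) * h))) / (lam + s))
            * ⨆ p : ℝ × ℝ, |g₁ p.1 p.2 - g₂ p.1 p.2|)
    ∧ (lam + s * Real.exp (-((lam + s) * h))) / (lam + s) < 1 := by
  have hK : (0:ℝ) < lam + s := by linarith
  constructor
  · rintro g₁ g₂ hm₁ hm₂ ⟨C₁, hC₁⟩ ⟨C₂, hC₂⟩
    set M := ⨆ p : ℝ × ℝ, |g₁ p.1 p.2 - g₂ p.1 p.2| with hMdef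
    have hbdd : BddAbove (Set.range fun p : ℝ × ℝ => |g₁ p.1 p.2 - g₂ p.1 p.2|) := by
      refine ⟨C₁ + C₂, ?_⟩
      rintro x ⟨p, rfl⟩
      calc |g₁ p.1 p.2 - g₂ p.1 p.2| ≤ |g₁ p.1 p.2| + |g₂ p.1 p.2| := abs_sub _ _
        _ ≤ C₁ + C₂ := add_le_add (hC₁ _ _) (hC₂ _ _)
    have hMle : ∀ u₁ u₂ : ℝ, |g₁ u₁ u₂ - g₂ u₁ u₂| ≤ M := fun u₁ u₂ =>
      le_ciSup hbdd ((u₁, u₂) : ℝ × ℝ)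
    have hM0 : 0 ≤ M := le_trans (abs_nonneg _) (hMle 0 0)
    -- f is integrable on Ioi 0
    have hfInt : IntegrableOn f (Set.Ioi (0:ℝ)) := by
      by_contra hcon
      rw [MeasureTheory.integral_undef hcon] at hfint
      norm_num at hfint
    have hC₁0 : 0 ≤ C₁ := le_trans (abs_nonneg _) (hC₁ 0 0)
    have hC₂0 : 0 ≤ C₂ := le_trans (abs_nonneg _) (hC₂ 0 0)
    -- inner-integrand integrability for a bounded measurable g
    have key : ∀ (g : ℝ → ℝ → ℝ), Measurable (fun p : ℝ × ℝ => g p.1 p.2) →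
        ∀ C : ℝ, (∀ u₁ u₂, |g u₁ u₂| ≤ C) → ∀ a b : ℝ,
        IntegrableOn (fun z => g (a - δ₁ * z) (b - δ₂ * z) * f z) (Set.Ioi (0:ℝ)) := by
      intro g hg C hC a b
      have hCnn : 0 ≤ C := le_trans (abs_nonneg _) (hC 0 0)
      have hmeas : Measurable (fun z => g (a - δ₁ * z) (b - δ₂ * z) * f z) := by
        exact (hg.comp (by fun_prop : Measurable fun z : ℝ => ((a - δ₁ * z, b - δ₂ * z) : ℝ × ℝ))).mul hfmeas
      refine MeasureTheory.Integrable.mono' (hfInt.const_mul C) hmeas.aestronglyMeasurable ?_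
      refine Filter.Eventually.of_forall fun z => ?_
      simp only [Real.norm_eq_abs, abs_mul, abs_of_nonneg (hfnonneg z)]
      exact mul_le_mul_of_nonneg_right (hC _ _) (hfnonneg z)
    -- sup over p
    refine ciSup_le fun p => ?_
    obtain ⟨u₁, u₂⟩ := p
    simp only
    rw [h𝒯 g₁, h𝒯 g₂]
    -- abbreviations
    set A₁ : ℝ → ℝ := fun t => Real.exp (r * t) * u₁ + (c₁ / r) * (Real.exp (r * t) - 1) with hA₁
    set A₂ : ℝ → ℝ := fun t => Real.exp (r * t) * u₂ + (c₂ / r) * (Real.exp (r * t) - 1) with hA₂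
    have hA₁m : Measurable A₁ := by fun_prop
    have hA₂m : Measurable A₂ := by fun_prop
    -- the inner integral function
    set I : (ℝ → ℝ → ℝ) → ℝ → ℝ := fun g t =>
      ∫ z in Set.Ioi (0:ℝ), g (A₁ t - δ₁ * z) (A₂ t - δ₂ * z) * f z with hIdef
    have hImeas : ∀ (g : ℝ → ℝ → ℝ), Measurable (fun p : ℝ × ℝ => g p.1 p.2) →
        StronglyMeasurable (I g) := by
      intro g hg
      have : Measurable (fun q : ℝ × ℝ => g (A₁ q.1 - δ₁ * q.2) (A₂ q.1 - δ₂ * q.2) * f q.2) := by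
        have h1 : Measurable fun q : ℝ × ℝ =>
            ((A₁ q.1 - δ₁ * q.2, A₂ q.1 - δ₂ * q.2) : ℝ × ℝ) := by
          exact ((hA₁m.comp measurable_fst).sub (measurable_snd.const_mul δ₁)).prodMk
            ((hA₂m.comp measurable_fst).sub (measurable_snd.const_mul δ₂))
        exact (hg.comp h1).mul (hfmeas.comp measurable_snd)
      exact this.stronglyMeasurable.integral_prod_right'
    have hIbound : ∀ (g : ℝ → ℝ → ℝ) (C : ℝ), (∀ u₁ u₂, |g u₁ u₂| ≤ C) →
        ∀ t, |I g t| ≤ C := by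
      intro g C hC t
      have hCnn : 0 ≤ C := le_trans (abs_nonneg _) (hC 0 0)
      rw [hIdef]
      simp only [← Real.norm_eq_abs]
      calc ‖∫ z in Set.Ioi (0:ℝ), g (A₁ t - δ₁ * z) (A₂ t - δ₂ * z) * f z‖
          ≤ ∫ z in Set.Ioi (0:ℝ), ‖g (A₁ t - δ₁ * z) (A₂ t - δ₂ * z) * f z‖ :=
            MeasureTheory.norm_integral_le_integral_norm _
        _ ≤ ∫ z in Set.Ioi (0:ℝ), C * f z := by
            refine MeasureTheory.integral_mono_of_nonneg
              (Filter.Eventually.of_forall fun z => norm_nonneg _)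
              (hfInt.const_mul C) (Filter.Eventually.of_forall fun z => ?_)
            simp only [Real.norm_eq_abs, abs_mul, abs_of_nonneg (hfnonneg z)]
            exact mul_le_mul_of_nonneg_right (hC _ _) (hfnonneg z)
        _ = C := by rw [MeasureTheory.integral_const_mul, hfint, mul_one]
    -- interval integrands
    set F : (ℝ → ℝ → ℝ) → ℝ → ℝ := fun g t =>
      lam * Real.exp (-((lam + s) * t)) * I g t with hFdef
    have hFint : ∀ (g : ℝ → ℝ → ℝ), Measurable (fun p : ℝ × ℝ => g p.1 p.2) →
        ∀ C : ℝ, (∀ u₁ u₂, |g u₁ u₂| ≤ C) → IntervalIntegrable (F g) volume 0 h := by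
      intro g hg C hC
      have hCnn : 0 ≤ C := le_trans (abs_nonneg _) (hC 0 0)
      rw [intervalIntegrable_iff_integrableOn_Ioc_of_le hh.le]
      have hFm : StronglyMeasurable (F g) := by
        refine StronglyMeasurable.mul ?_ (hImeas g hg)
        exact (measurable_const.mul (by fun_prop : Measurable fun t : ℝ =>
          Real.exp (-((lam + s) * t)))).stronglyMeasurable
      refine ⟨hFm.aestronglyMeasurable.restrict, ?_⟩
      refine MeasureTheory.HasFiniteIntegral.of_bounded (C := lam * C) ?_
      refine MeasureTheory.ae_restrict_of_forall_mem measurableSet_Ioc fun t ht => ?_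
      simp only [Real.norm_eq_abs, hFdef]
      rw [abs_mul, abs_mul, abs_of_pos hlam, abs_of_pos (Real.exp_pos _)]
      have h1 : Real.exp (-((lam + s) * t)) ≤ 1 := by
        rw [Real.exp_le_one_iff]
        nlinarith [ht.1]
      calc lam * Real.exp (-((lam + s) * t)) * |I g t|
          ≤ lam * 1 * C := by
            refine mul_le_mul (mul_le_mul_of_nonneg_left h1 hlam.le)
              (hIbound g C hC t) (abs_nonneg _) (by positivity)
        _ = lam * C := by ring
    -- pointwise bound on F g₁ - F g₂
    have hFdiff : ∀ t, |F g₁ t - F g₂ t| ≤ lam * Real.exp (-((lam + s) * t)) * M := by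
      intro t
      have hsub : I g₁ t - I g₂ t = ∫ z in Set.Ioi (0:ℝ),
          (g₁ (A₁ t - δ₁ * z) (A₂ t - δ₂ * z) - g₂ (A₁ t - δ₁ * z) (A₂ t - δ₂ * z)) * f z := by
        rw [hIdef]
        simp only
        rw [← MeasureTheory.integral_sub (key g₁ hm₁ C₁ hC₁ _ _) (key g₂ hm₂ C₂ hC₂ _ _)]
        congr 1
        ext z
        ring
      have hIdiff : |I g₁ t - I g₂ t| ≤ M := by
        rw [hsub]
        calc |∫ z in Set.Ioi (0:ℝ), (g₁ (A₁ t - δ₁ * z) (A₂ t - δ₂ * z)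
                - g₂ (A₁ t - δ₁ * z) (A₂ t - δ₂ * z)) * f z|
            ≤ ∫ z in Set.Ioi (0:ℝ), ‖(g₁ (A₁ t - δ₁ * z) (A₂ t - δ₂ * z)
                - g₂ (A₁ t - δ₁ * z) (A₂ t - δ₂ * z)) * f z‖ := by
              rw [← Real.norm_eq_abs]
              exact MeasureTheory.norm_integral_le_integral_norm _
          _ ≤ ∫ z in Set.Ioi (0:ℝ), M * f z := by
              refine MeasureTheory.integral_mono_of_nonneg
                (Filter.Eventually.of_forall fun z => norm_nonneg _)
                (hfInt.const_mul M) (Filter.Eventually.of_forall fun z => ?_)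
              simp only [Real.norm_eq_abs, abs_mul, abs_of_nonneg (hfnonneg z)]
              exact mul_le_mul_of_nonneg_right (hMle _ _) (hfnonneg z)
          _ = M := by rw [MeasureTheory.integral_const_mul, hfint, mul_one]
      have : F g₁ t - F g₂ t = lam * Real.exp (-((lam + s) * t)) * (I g₁ t - I g₂ t) := by
        rw [hFdef]; ring
      rw [this, abs_mul, abs_mul, abs_of_pos hlam, abs_of_pos (Real.exp_pos _)]
      exact mul_le_mul_of_nonneg_left hIdiff (by positivity)
    -- the interval integral bound
    have hIIbound : |(∫ t in (0:ℝ)..h, F g₁ t) - ∫ t in (0:ℝ)..h, F g₂ t|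
        ≤ (lam / (lam + s)) * (1 - Real.exp (-((lam + s) * h))) * M := by
      rw [← intervalIntegral.integral_sub (hFint g₁ hm₁ C₁ hC₁) (hFint g₂ hm₂ C₂ hC₂)]
      have hexp : (∫ t in (0:ℝ)..h, lam * Real.exp (-((lam + s) * t)) * M)
          = (lam / (lam + s)) * (1 - Real.exp (-((lam + s) * h))) * M := by
        have h1 : (∫ t in (0:ℝ)..h, lam * Real.exp (-((lam + s) * t)) * M)
            = (lam * M) * ∫ t in (0:ℝ)..h, Real.exp ((-(lam + s)) * t) := by
          rw [← intervalIntegral.integral_const_mul]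
          congr 1; ext t; ring_nf
        rw [h1, intervalIntegral.integral_comp_mul_left Real.exp (by linarith : -(lam+s) ≠ 0),
          integral_exp]
        rw [mul_zero, Real.exp_zero, smul_eq_mul,
          show -(lam+s) * h = -((lam+s) * h) by ring, inv_neg]
        field_simp
        ring
      calc |∫ t in (0:ℝ)..h, (F g₁ t - F g₂ t)|
          ≤ ∫ t in (0:ℝ)..h, |F g₁ t - F g₂ t| := by
            simpa [Real.norm_eq_abs] using
              intervalIntegral.norm_integral_le_integral_norm
                (f := fun t => F g₁ t - F g₂ t) (μ := volume) hh.le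
        _ ≤ ∫ t in (0:ℝ)..h, lam * Real.exp (-((lam + s) * t)) * M := by
            refine intervalIntegral.integral_mono_on hh.le
              (((hFint g₁ hm₁ C₁ hC₁).sub (hFint g₂ hm₂ C₂ hC₂)).abs) ?_
              (fun t _ => hFdiff t)
            apply Continuous.intervalIntegrable
            fun_prop
        _ = (lam / (lam + s)) * (1 - Real.exp (-((lam + s) * h))) * M := hexp
    -- assemble
    have hfirst : |Real.exp (-((lam + s) * h)) * g₁ (A₁ h) (A₂ h)
        - Real.exp (-((lam + s) * h)) * g₂ (A₁ h) (A₂ h)|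
        ≤ Real.exp (-((lam + s) * h)) * M := by
      rw [← mul_sub, abs_mul, abs_of_pos (Real.exp_pos _)]
      exact mul_le_mul_of_nonneg_left (hMle _ _) (Real.exp_pos _).le
    calc |(Real.exp (-((lam + s) * h)) * g₁ (A₁ h) (A₂ h) + ∫ t in (0:ℝ)..h, F g₁ t)
          - (Real.exp (-((lam + s) * h)) * g₂ (A₁ h) (A₂ h) + ∫ t in (0:ℝ)..h, F g₂ t)|
        ≤ |Real.exp (-((lam + s) * h)) * g₁ (A₁ h) (A₂ h)
            - Real.exp (-((lam + s) * h)) * g₂ (A₁ h) (A₂ h)|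
          + |(∫ t in (0:ℝ)..h, F g₁ t) - ∫ t in (0:ℝ)..h, F g₂ t| := by
          have hsplit : (Real.exp (-((lam + s) * h)) * g₁ (A₁ h) (A₂ h)
                + ∫ t in (0:ℝ)..h, F g₁ t)
              - (Real.exp (-((lam + s) * h)) * g₂ (A₁ h) (A₂ h) + ∫ t in (0:ℝ)..h, F g₂ t)
              = (Real.exp (-((lam + s) * h)) * g₁ (A₁ h) (A₂ h)
                - Real.exp (-((lam + s) * h)) * g₂ (A₁ h) (A₂ h))
              + ((∫ t in (0:ℝ)..h, F g₁ t) - ∫ t in (0:ℝ)..h, F g₂ t) := by ring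
          rw [hsplit]
          exact abs_add_le _ _
      _ ≤ Real.exp (-((lam + s) * h)) * M
          + (lam / (lam + s)) * (1 - Real.exp (-((lam + s) * h))) * M :=
          add_le_add hfirst hIIbound
      _ = ((lam + s * Real.exp (-((lam + s) * h))) / (lam + s)) * M := by
          field_simp
          ring
  · rw [div_lt_one hK]
    have : Real.exp (-((lam + s) * h)) < 1 := by
      rw [Real.exp_lt_one_iff]
      nlinarith
    nlinarith
end

section
/- If g₁, g₂ : ℝ² → ℝ are bounded measurable functions that are both fixed points of 𝒯, i.e. 𝒯g₁ = g₁ and 𝒯g₂ = g₂ pointwise on ℝ², then g₁ = g₂. -/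
open MeasureTheory Filter

/-- uniqueness via Banach's fixed point theorem: if two bounded measurable
functions `g₁ g₂ : ℝ² → ℝ` are both fixed points of the renewal operator `𝒯`, then
`g₁ = g₂`. -/
theorem stmt_10 (r lam s h c₁ c₂ δ₁ δ₂ : ℝ)
    (hr : 0 < r) (hlam : 0 < lam) (hs : 0 < s) (hh : 0 < h)
    (hc₁ : 0 < c₁) (hc₂ : 0 < c₂)
    (hδ₁ : δ₁ ∈ Set.Ioo (0 : ℝ) 1) (hδ₂ : δ₂ ∈ Set.Ioo (0 : ℝ) 1) (hδsum : δ₁ + δ₂ = 1)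
    (f : ℝ → ℝ) (hfmeas : Measurable f) (hfnonneg : ∀ z, 0 ≤ f z)
    (hfint : ∫ z in Set.Ioi (0 : ℝ), f z = 1)
    (𝒯 : (ℝ → ℝ → ℝ) → ℝ → ℝ → ℝ)
    (h𝒯 : ∀ (g : ℝ → ℝ → ℝ) (u₁ u₂ : ℝ), 𝒯 g u₁ u₂
      = Real.exp (-((lam + s) * h))
          * g (Real.exp (r * h) * u₁ + (c₁ / r) * (Real.exp (r * h) - 1))
              (Real.exp (r * h) * u₂ + (c₂ / r) * (Real.exp (r * h) - 1))
        + ∫ t in (0 : ℝ)..h, lam * Real.exp (-((lam + s) * t))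
            * ∫ z in Set.Ioi (0 : ℝ),
                g (Real.exp (r * t) * u₁ + (c₁ / r) * (Real.exp (r * t) - 1) - δ₁ * z)
                  (Real.exp (r * t) * u₂ + (c₂ / r) * (Real.exp (r * t) - 1) - δ₂ * z)
                * f z)
    (g₁ g₂ : ℝ → ℝ → ℝ)
    (hg₁meas : Measurable (fun p : ℝ × ℝ => g₁ p.1 p.2))
    (hg₂meas : Measurable (fun p : ℝ × ℝ => g₂ p.1 p.2))
    (hg₁bdd : ∃ C₁, ∀ u₁ u₂, |g₁ u₁ u₂| ≤ C₁) (hg₂bdd : ∃ C₂, ∀ u₁ u₂, |g₂ u₁ u₂| ≤ C₂)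
    (hfix₁ : ∀ u₁ u₂, 𝒯 g₁ u₁ u₂ = g₁ u₁ u₂) (hfix₂ : ∀ u₁ u₂, 𝒯 g₂ u₁ u₂ = g₂ u₁ u₂) :
    g₁ = g₂ := by
  classical
  obtain ⟨C₁, hC₁⟩ := hg₁bdd
  obtain ⟨C₂, hC₂⟩ := hg₂bdd
  have hApos : (0:ℝ) < lam + s := by linarith
  -- `f` is integrable on `Ioi 0`
  have hfInt : IntegrableOn f (Set.Ioi (0:ℝ)) := by
    by_contra hc
    rw [MeasureTheory.integral_undef hc] at hfint
    norm_num at hfint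
  -- the supremum of the difference
  have hbdd : BddAbove (Set.range fun p : ℝ × ℝ => |g₁ p.1 p.2 - g₂ p.1 p.2|) := by
    refine ⟨C₁ + C₂, ?_⟩
    rintro x ⟨p, rfl⟩
    exact (abs_sub _ _).trans (add_le_add (hC₁ _ _) (hC₂ _ _))
  set M := sSup (Set.range fun p : ℝ × ℝ => |g₁ p.1 p.2 - g₂ p.1 p.2|) with hMdef
  have hle : ∀ a b : ℝ, |g₁ a b - g₂ a b| ≤ M := fun a b => le_csSup hbdd ⟨(a, b), rfl⟩
  have hM0 : 0 ≤ M := le_trans (abs_nonneg _) (hle 0 0)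
  have hE0 : (0:ℝ) < Real.exp (-((lam + s) * h)) := Real.exp_pos _
  have hE1 : Real.exp (-((lam + s) * h)) < 1 := by
    rw [Real.exp_lt_one_iff]; nlinarith
  -- value of the exponential integral
  have hexp : (∫ t in (0:ℝ)..h, Real.exp (-((lam + s) * t)))
      = (1 - Real.exp (-((lam + s) * h))) / (lam + s) := by
    have hrw : ∀ t : ℝ, Real.exp (-((lam + s) * t)) = Real.exp ((-(lam + s)) * t) := fun t => by
      ring_nf
    simp_rw [hrw]
    rw [intervalIntegral.integral_comp_mul_left Real.exp (neg_ne_zero.mpr hApos.ne'),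
      integral_exp, smul_eq_mul, show (-(lam + s)) * h = -((lam + s) * h) by ring, mul_zero,
      Real.exp_zero, inv_neg, div_eq_mul_inv]
    ring
  -- integrability of the inner integrand
  have hintg : ∀ g : ℝ → ℝ → ℝ, Measurable (fun p : ℝ × ℝ => g p.1 p.2) →
      ∀ C : ℝ, (∀ a b, |g a b| ≤ C) → ∀ P Q : ℝ,
      IntegrableOn (fun z => g (P - δ₁ * z) (Q - δ₂ * z) * f z) (Set.Ioi (0:ℝ)) := by
    intro g hg C hC P Q
    have hmz : Measurable fun z : ℝ => ((P - δ₁ * z, Q - δ₂ * z) : ℝ × ℝ) := by fun_prop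
    have hm : Measurable fun z : ℝ => g (P - δ₁ * z) (Q - δ₂ * z) * f z :=
      (hg.comp hmz).mul hfmeas
    refine Integrable.mono' (hfInt.const_mul C) hm.aestronglyMeasurable ?_
    refine Filter.Eventually.of_forall fun z => ?_
    rw [Real.norm_eq_abs, abs_mul, abs_of_nonneg (hfnonneg z)]
    exact mul_le_mul_of_nonneg_right (hC _ _) (hfnonneg z)
  -- bound on the inner integral
  have hIbd : ∀ g : ℝ → ℝ → ℝ, Measurable (fun p : ℝ × ℝ => g p.1 p.2) →
      ∀ C : ℝ, (∀ a b, |g a b| ≤ C) → ∀ P Q : ℝ,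
      |∫ z in Set.Ioi (0:ℝ), g (P - δ₁ * z) (Q - δ₂ * z) * f z| ≤ C := by
    intro g hg C hC P Q
    have h1 : ‖∫ z in Set.Ioi (0:ℝ), g (P - δ₁ * z) (Q - δ₂ * z) * f z‖
        ≤ ∫ z in Set.Ioi (0:ℝ), C * f z := by
      refine norm_integral_le_of_norm_le (hfInt.const_mul C)
        (Filter.Eventually.of_forall fun z => ?_)
      rw [Real.norm_eq_abs, abs_mul, abs_of_nonneg (hfnonneg z)]
      exact mul_le_mul_of_nonneg_right (hC _ _) (hfnonneg z)
    rwa [MeasureTheory.integral_const_mul, hfint, mul_one, Real.norm_eq_abs] at h1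
  -- bound on the difference of the inner integrals
  have hIdiff : ∀ P Q : ℝ,
      |(∫ z in Set.Ioi (0:ℝ), g₁ (P - δ₁ * z) (Q - δ₂ * z) * f z)
        - ∫ z in Set.Ioi (0:ℝ), g₂ (P - δ₁ * z) (Q - δ₂ * z) * f z| ≤ M := by
    intro P Q
    rw [← MeasureTheory.integral_sub (hintg g₁ hg₁meas C₁ hC₁ P Q)
      (hintg g₂ hg₂meas C₂ hC₂ P Q)]
    have h1 : ‖∫ z in Set.Ioi (0:ℝ),
        (g₁ (P - δ₁ * z) (Q - δ₂ * z) * f z - g₂ (P - δ₁ * z) (Q - δ₂ * z) * f z)‖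
        ≤ ∫ z in Set.Ioi (0:ℝ), M * f z := by
      refine norm_integral_le_of_norm_le (hfInt.const_mul M)
        (Filter.Eventually.of_forall fun z => ?_)
      rw [← sub_mul, Real.norm_eq_abs, abs_mul, abs_of_nonneg (hfnonneg z)]
      exact mul_le_mul_of_nonneg_right (hle _ _) (hfnonneg z)
    rwa [MeasureTheory.integral_const_mul, hfint, mul_one, Real.norm_eq_abs] at h1
  -- the key contraction estimate
  have key : ∀ u₁ u₂ : ℝ, |g₁ u₁ u₂ - g₂ u₁ u₂|
      ≤ (Real.exp (-((lam + s) * h))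
          + lam / (lam + s) * (1 - Real.exp (-((lam + s) * h)))) * M := by
    intro u₁ u₂
    -- interval integrability of the outer integrand
    have hFint : ∀ g : ℝ → ℝ → ℝ, Measurable (fun p : ℝ × ℝ => g p.1 p.2) →
        ∀ C : ℝ, (∀ a b, |g a b| ≤ C) →
        IntervalIntegrable (fun t => lam * Real.exp (-((lam + s) * t))
          * ∫ z in Set.Ioi (0:ℝ),
              g (Real.exp (r * t) * u₁ + (c₁ / r) * (Real.exp (r * t) - 1) - δ₁ * z)
                (Real.exp (r * t) * u₂ + (c₂ / r) * (Real.exp (r * t) - 1) - δ₂ * z)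
              * f z) MeasureTheory.volume 0 h := by
      intro g hg C hC
      have hmeasI : Measurable fun t : ℝ => ∫ z in Set.Ioi (0:ℝ),
          g (Real.exp (r * t) * u₁ + (c₁ / r) * (Real.exp (r * t) - 1) - δ₁ * z)
            (Real.exp (r * t) * u₂ + (c₂ / r) * (Real.exp (r * t) - 1) - δ₂ * z) * f z := by
        have hcont : Measurable fun p : ℝ × ℝ =>
            ((Real.exp (r * p.1) * u₁ + (c₁ / r) * (Real.exp (r * p.1) - 1) - δ₁ * p.2,
              Real.exp (r * p.1) * u₂ + (c₂ / r) * (Real.exp (r * p.1) - 1) - δ₂ * p.2)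
              : ℝ × ℝ) := by fun_prop
        have hjm : StronglyMeasurable fun p : ℝ × ℝ =>
            g (Real.exp (r * p.1) * u₁ + (c₁ / r) * (Real.exp (r * p.1) - 1) - δ₁ * p.2)
              (Real.exp (r * p.1) * u₂ + (c₂ / r) * (Real.exp (r * p.1) - 1) - δ₂ * p.2)
              * f p.2 :=
          ((hg.comp hcont).mul (hfmeas.comp measurable_snd)).stronglyMeasurable
        exact hjm.integral_prod_right'.measurable
      apply IntervalIntegrable.mono_fun' (g := fun _ : ℝ => lam * C) intervalIntegrable_const
      · exact ((measurable_const.mul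
          (by fun_prop : Measurable fun t : ℝ => Real.exp (-((lam + s) * t)))).mul
          hmeasI).aestronglyMeasurable
      · filter_upwards [MeasureTheory.ae_restrict_mem measurableSet_uIoc] with t ht
        rw [Set.uIoc_of_le hh.le] at ht
        have ht0 : 0 < t := ht.1
        have h1 : Real.exp (-((lam + s) * t)) ≤ 1 := by
          rw [Real.exp_le_one_iff]; nlinarith
        have h2 := hIbd g hg C hC
          (Real.exp (r * t) * u₁ + (c₁ / r) * (Real.exp (r * t) - 1))
          (Real.exp (r * t) * u₂ + (c₂ / r) * (Real.exp (r * t) - 1))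
        rw [Real.norm_eq_abs, abs_mul, abs_mul, abs_of_pos hlam, abs_of_pos (Real.exp_pos _)]
        have h3 := mul_le_mul (mul_le_mul_of_nonneg_left h1 hlam.le) h2 (abs_nonneg _)
          (by positivity : (0:ℝ) ≤ lam * 1)
        simpa using h3
    have hF₁ := hFint g₁ hg₁meas C₁ hC₁
    have hF₂ := hFint g₂ hg₂meas C₂ hC₂
    have e₁ : g₁ u₁ u₂ = _ := (hfix₁ u₁ u₂).symm.trans (h𝒯 g₁ u₁ u₂)
    have e₂ : g₂ u₁ u₂ = _ := (hfix₂ u₁ u₂).symm.trans (h𝒯 g₂ u₁ u₂)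
    have hdiff : g₁ u₁ u₂ - g₂ u₁ u₂
        = Real.exp (-((lam + s) * h))
            * (g₁ (Real.exp (r * h) * u₁ + (c₁ / r) * (Real.exp (r * h) - 1))
                  (Real.exp (r * h) * u₂ + (c₂ / r) * (Real.exp (r * h) - 1))
               - g₂ (Real.exp (r * h) * u₁ + (c₁ / r) * (Real.exp (r * h) - 1))
                  (Real.exp (r * h) * u₂ + (c₂ / r) * (Real.exp (r * h) - 1)))
          + ∫ t in (0:ℝ)..h,
              (lam * Real.exp (-((lam + s) * t))
                * (∫ z in Set.Ioi (0:ℝ),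
                    g₁ (Real.exp (r * t) * u₁ + (c₁ / r) * (Real.exp (r * t) - 1) - δ₁ * z)
                      (Real.exp (r * t) * u₂ + (c₂ / r) * (Real.exp (r * t) - 1) - δ₂ * z)
                    * f z)
               - lam * Real.exp (-((lam + s) * t))
                * (∫ z in Set.Ioi (0:ℝ),
                    g₂ (Real.exp (r * t) * u₁ + (c₁ / r) * (Real.exp (r * t) - 1) - δ₁ * z)
                      (Real.exp (r * t) * u₂ + (c₂ / r) * (Real.exp (r * t) - 1) - δ₂ * z)
                    * f z)) := by
      rw [e₁, e₂, intervalIntegral.integral_sub hF₁ hF₂]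
      ring
    -- bound on the outer integral of the difference
    have hGbound : ‖∫ t in (0:ℝ)..h,
        (lam * Real.exp (-((lam + s) * t))
          * (∫ z in Set.Ioi (0:ℝ),
              g₁ (Real.exp (r * t) * u₁ + (c₁ / r) * (Real.exp (r * t) - 1) - δ₁ * z)
                (Real.exp (r * t) * u₂ + (c₂ / r) * (Real.exp (r * t) - 1) - δ₂ * z)
              * f z)
         - lam * Real.exp (-((lam + s) * t))
          * (∫ z in Set.Ioi (0:ℝ),
              g₂ (Real.exp (r * t) * u₁ + (c₁ / r) * (Real.exp (r * t) - 1) - δ₁ * z)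
                (Real.exp (r * t) * u₂ + (c₂ / r) * (Real.exp (r * t) - 1) - δ₂ * z)
              * f z))‖
        ≤ |∫ t in (0:ℝ)..h, lam * Real.exp (-((lam + s) * t)) * M| := by
      refine intervalIntegral.norm_integral_le_abs_of_norm_le
        (Filter.Eventually.of_forall fun t => ?_)
        ((by fun_prop :
          Continuous fun t : ℝ => lam * Real.exp (-((lam + s) * t)) * M).intervalIntegrable 0 h)
      rw [← mul_sub, Real.norm_eq_abs, abs_mul,
        abs_of_pos (by positivity : (0:ℝ) < lam * Real.exp (-((lam + s) * t)))]
      exact mul_le_mul_of_nonneg_left (hIdiff _ _) (by positivity)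
    have hGval : |∫ t in (0:ℝ)..h, lam * Real.exp (-((lam + s) * t)) * M|
        = lam * ((1 - Real.exp (-((lam + s) * h))) / (lam + s)) * M := by
      rw [intervalIntegral.integral_mul_const, intervalIntegral.integral_const_mul, hexp]
      have h1E : (0:ℝ) ≤ 1 - Real.exp (-((lam + s) * h)) := by linarith
      exact abs_of_nonneg (mul_nonneg (mul_nonneg hlam.le (div_nonneg h1E hApos.le)) hM0)
    rw [hdiff]
    refine le_trans (abs_add_le _ _) ?_
    rw [abs_mul, abs_of_pos (Real.exp_pos _),
      show (Real.exp (-((lam + s) * h))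
          + lam / (lam + s) * (1 - Real.exp (-((lam + s) * h)))) * M
        = Real.exp (-((lam + s) * h)) * M
          + lam * ((1 - Real.exp (-((lam + s) * h))) / (lam + s)) * M by ring]
    refine add_le_add (mul_le_mul_of_nonneg_left (hle _ _) (Real.exp_pos _).le) ?_
    calc _ ≤ |∫ t in (0:ℝ)..h, lam * Real.exp (-((lam + s) * t)) * M| := hGbound
      _ = _ := hGval
  -- conclude via contraction
  set kk := Real.exp (-((lam + s) * h))
    + lam / (lam + s) * (1 - Real.exp (-((lam + s) * h))) with hkk
  have hk1 : kk < 1 := by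
    have hlA : lam / (lam + s) < 1 := (div_lt_one hApos).mpr (by linarith)
    rw [hkk]
    nlinarith [mul_pos (sub_pos.mpr hE1) (sub_pos.mpr hlA)]
  have hMk : M ≤ kk * M := by
    rw [hMdef]
    refine csSup_le ⟨|g₁ 0 0 - g₂ 0 0|, ⟨(0, 0), rfl⟩⟩ ?_
    rintro x ⟨⟨a, b⟩, rfl⟩
    exact key a b
  have hMzero : M = 0 := le_antisymm (by nlinarith) hM0
  funext a b
  have hab := hle a b
  rw [hMzero] at hab
  exact sub_eq_zero.mp (abs_nonpos_iff.mp hab)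
end

section
/- For every t > 0, lim_{x→∞} (∫_{tx}^{atx} L(u) u^{−(α+1)} du) / (∫_x^{ax} L(u) u^{−(α+1)} du) = t^{−α}. -/
open MeasureTheory Filter

/-- core limit computation in the proof of Lemma 3.3: if `L` is
continuous, slowly varying and tends to `∞`, then for every `t > 0`,
`(∫_{tx}^{atx} L(u) u^{-(α+1)} du) / (∫_x^{ax} L(u) u^{-(α+1)} du) → t^{-α}` as
`x → ∞`. -/
theorem stmt_13 (α a : ℝ) (hα : 0 < α) (ha : 1 < a)
    (L : ℝ → ℝ) (hL : ContinuousOn L (Set.Ioi 0))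
    (hLslow : ∀ t > (0 : ℝ), Tendsto (fun x => L (t * x) / L x) atTop (nhds 1))
    (hLtop : Tendsto L atTop atTop) :
    ∀ t > (0 : ℝ),
      Tendsto (fun x =>
          (∫ u in (t * x)..(a * t * x), L u * u ^ (-(α + 1)))
            / ∫ u in x..(a * x), L u * u ^ (-(α + 1)))
        atTop (nhds (t ^ (-α))) := by
  intro t ht
  set g : ℝ → ℝ := fun u => L u * u ^ (-(α + 1)) with hgdef
  set gt : ℝ → ℝ := fun v => L (t * v) * v ^ (-(α + 1)) with hgtdef
  set D : ℝ → ℝ := fun x => ∫ u in x..(a * x), g u with hDdef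
  set N : ℝ → ℝ := fun x => ∫ v in x..(a * x), gt v with hNdef
  have hrpow : ContinuousOn (fun u : ℝ => u ^ (-(α + 1))) (Set.Ioi 0) :=
    ContinuousOn.rpow_const continuousOn_id (fun x hx => Or.inl (ne_of_gt hx))
  have hgc : ContinuousOn g (Set.Ioi 0) := hL.mul hrpow
  have hgtc : ContinuousOn gt (Set.Ioi 0) := by
    apply ContinuousOn.mul _ hrpow
    apply hL.comp (continuous_const.mul continuous_id).continuousOn
    intro v hv
    exact mul_pos ht hv
  have hsub : ∀ x : ℝ, 0 < x → Set.uIcc x (a * x) ⊆ Set.Ioi 0 := by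
    intro x hx
    rw [Set.uIcc_of_le (le_mul_of_one_le_left hx.le ha.le)]
    intro v hv
    exact lt_of_lt_of_le hx hv.1
  have hIg : ∀ x : ℝ, 0 < x → IntervalIntegrable g volume x (a * x) :=
    fun x hx => (hgc.mono (hsub x hx)).intervalIntegrable
  have hIgt : ∀ x : ℝ, 0 < x → IntervalIntegrable gt volume x (a * x) :=
    fun x hx => (hgtc.mono (hsub x hx)).intervalIntegrable
  -- Step 2 : N / D → 1
  have hND : Tendsto (fun x => N x / D x) atTop (nhds 1) := by
    rw [Metric.tendsto_atTop]
    intro ε hε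
    have hε2 : 0 < ε / 2 := by positivity
    obtain ⟨x₁, hx₁⟩ := (Metric.tendsto_atTop.mp (hLslow t ht)) (ε / 2) hε2
    obtain ⟨x₂, hx₂⟩ := eventually_atTop.mp (hLtop.eventually_ge_atTop 1)
    refine ⟨max (max x₁ x₂) 1, fun x hx => ?_⟩
    have hx1 : (1 : ℝ) ≤ x := le_trans (le_max_right _ _) hx
    have hx0 : 0 < x := lt_of_lt_of_le one_pos hx1
    have hxa : x < a * x := lt_mul_of_one_lt_left hx0 ha
    -- bounds on L on [x, a*x]
    have key : ∀ v ∈ Set.Icc x (a * x),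
        (1 - ε / 2) * g v ≤ gt v ∧ gt v ≤ (1 + ε / 2) * g v := by
      intro v hv
      have hvx1 : x₁ ≤ v := le_trans (le_trans (le_trans (le_max_left _ _) (le_max_left _ _)) hx) hv.1
      have hvx2 : x₂ ≤ v := le_trans (le_trans (le_trans (le_max_right _ _) (le_max_left _ _)) hx) hv.1
      have hv0 : 0 < v := lt_of_lt_of_le (lt_of_lt_of_le one_pos (le_trans (le_max_right _ _) hx)) hv.1
      have hLv : (1 : ℝ) ≤ L v := hx₂ v hvx2
      have hLv0 : 0 < L v := lt_of_lt_of_le one_pos hLv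
      have hd := hx₁ v hvx1
      rw [Real.dist_eq, abs_sub_lt_iff] at hd
      have hub : L (t * v) ≤ (1 + ε / 2) * L v := by
        have h' : L (t * v) / L v < 1 + ε / 2 := by linarith [hd.1]
        rw [div_lt_iff₀ hLv0] at h'
        linarith
      have hlb : (1 - ε / 2) * L v ≤ L (t * v) := by
        have := hd.2
        have h2 : 1 - ε / 2 ≤ L (t * v) / L v := by linarith
        rw [le_div_iff₀ hLv0] at h2
        linarith
      have hp : (0 : ℝ) < v ^ (-(α + 1)) := Real.rpow_pos_of_pos hv0 _
      constructor
      · have := mul_le_mul_of_nonneg_right hlb hp.le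
        simpa [hgdef, hgtdef, mul_assoc, mul_comm, mul_left_comm] using this
      · have := mul_le_mul_of_nonneg_right hub hp.le
        simpa [hgdef, hgtdef, mul_assoc, mul_comm, mul_left_comm] using this
    have hD0 : 0 < D x := by
      apply intervalIntegral.intervalIntegral_pos_of_pos_on (hIg x hx0) _ hxa
      intro v hv
      have hv0 : 0 < v := lt_trans hx0 hv.1
      have hvx2 : x₂ ≤ v := le_trans (le_trans (le_trans (le_max_right _ _) (le_max_left _ _)) hx) hv.1.le
      have hLv : (1 : ℝ) ≤ L v := hx₂ v hvx2
      exact mul_pos (lt_of_lt_of_le one_pos hLv) (Real.rpow_pos_of_pos hv0 _)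
    have hub : N x ≤ (1 + ε / 2) * D x := by
      have : N x ≤ ∫ v in x..(a * x), (1 + ε / 2) * g v := by
        apply intervalIntegral.integral_mono_on hxa.le (hIgt x hx0)
          ((hIg x hx0).const_mul _)
        exact fun v hv => (key v hv).2
      rwa [intervalIntegral.integral_const_mul] at this
    have hlb : (1 - ε / 2) * D x ≤ N x := by
      have : (∫ v in x..(a * x), (1 - ε / 2) * g v) ≤ N x := by
        apply intervalIntegral.integral_mono_on hxa.le ((hIg x hx0).const_mul _)
          (hIgt x hx0)
        exact fun v hv => (key v hv).1
      rwa [intervalIntegral.integral_const_mul] at this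
    have h1 : N x / D x ≤ 1 + ε / 2 := by
      rw [div_le_iff₀ hD0]; linarith
    have h2 : 1 - ε / 2 ≤ N x / D x := by
      rw [le_div_iff₀ hD0]; linarith
    rw [Real.dist_eq, abs_sub_lt_iff]
    constructor <;> linarith
  -- Step 1 : change of variables
  have hpow : t * t ^ (-(α + 1)) = t ^ (-α) := by
    nth_rewrite 1 [← Real.rpow_one t]
    rw [← Real.rpow_add ht]
    norm_num
  have heq : ∀ x : ℝ, 0 < x →
      (∫ u in (t * x)..(a * t * x), g u) = t ^ (-α) * N x := by
    intro x hx
    have h1 : a * t * x = t * (a * x) := by ring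
    have h2 : (∫ v in x..(a * x), g (t * v)) = t⁻¹ • ∫ u in (t * x)..(t * (a * x)), g u :=
      intervalIntegral.integral_comp_mul_left g (ne_of_gt ht)
    have h3 : (∫ u in (t * x)..(t * (a * x)), g u) = t * ∫ v in x..(a * x), g (t * v) := by
      rw [h2, smul_eq_mul, mul_inv_cancel_left₀ (ne_of_gt ht)]
    have h4 : (∫ v in x..(a * x), g (t * v)) = t ^ (-(α + 1)) * N x := by
      have hcongr : Set.EqOn (fun v => g (t * v)) (fun v => t ^ (-(α + 1)) * gt v)
          (Set.uIcc x (a * x)) := by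
        intro v hv
        have hv0 : 0 < v := hsub x hx hv
        simp only [hgdef, hgtdef]
        rw [Real.mul_rpow ht.le hv0.le]
        ring
      rw [intervalIntegral.integral_congr hcongr, intervalIntegral.integral_const_mul]
    rw [h1, h3, h4, ← mul_assoc, hpow]
  have hev : (fun x => (∫ u in (t * x)..(a * t * x), g u) / D x)
      =ᶠ[atTop] fun x => t ^ (-α) * (N x / D x) := by
    filter_upwards [eventually_gt_atTop 0] with x hx
    rw [heq x hx, mul_div_assoc]
  have hfin : Tendsto (fun x => t ^ (-α) * (N x / D x)) atTop (nhds (t ^ (-α))) := by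
    have h := hND.const_mul (t ^ (-α))
    simpa using h
  exact Tendsto.congr' hev.symm hfin
end

section
/- Define G(x) = (1/T) ∫_0^T L(e^{ry}x) (e^{ry}x)^{−α} dy for x > 0. Then G is regularly varying at infinity with index −α: for every t > 0, lim_{x→∞} G(tx)/G(x) = t^{−α}. -/
open MeasureTheory Filter

/-- Karamata's uniform convergence theorem, log form, shifts in `[0, M]`. -/
lemma uct0 (L : ℝ → ℝ) (hL : ContinuousOn L (Set.Ioi 0))
    (hLslow : ∀ t > (0 : ℝ), Tendsto (fun x => L (t * x) / L x) atTop (nhds 1))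
    (hL1 : ∀ᶠ x in atTop, 1 ≤ L x)
    (M : ℝ) (hM : 0 < M) (ε : ℝ) (hε : 0 < ε) :
    ∀ᶠ x in atTop, ∀ μ ∈ Set.Icc 0 M,
      |Real.log (L (Real.exp μ * x)) - Real.log (L x)| ≤ ε := by
  by_contra hcon
  rw [Filter.not_eventually] at hcon
  obtain ⟨x0, hx0⟩ := eventually_atTop.mp hL1
  -- a sequence of bad points
  have key : ∀ n : ℕ, ∃ x, (max x0 1 + n ≤ x) ∧ ∃ μ ∈ Set.Icc (0:ℝ) M,
      ε < |Real.log (L (Real.exp μ * x)) - Real.log (L x)| := by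
    intro n
    obtain ⟨x, hx, hbad⟩ := (frequently_atTop.mp hcon) (max x0 1 + n)
    push_neg at hbad
    obtain ⟨μ, hμ, h⟩ := hbad
    exact ⟨x, hx, μ, hμ, h⟩
  choose X hX μs hμs hbad using key
  have hX1 : ∀ n, (1:ℝ) ≤ X n := fun n => le_trans (by
    have := (le_max_right x0 1); nlinarith [Nat.cast_nonneg (α := ℝ) n]) (hX n)
  have hXx0 : ∀ n, x0 ≤ X n := fun n => le_trans (by
    have := (le_max_left x0 1); nlinarith [Nat.cast_nonneg (α := ℝ) n]) (hX n)
  have hXtop : Tendsto X atTop atTop := by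
    apply tendsto_atTop_mono hX
    exact tendsto_atTop_add_const_left _ _ tendsto_natCast_atTop_atTop
  -- value of L is ≥ 1 at all relevant points
  have hLge : ∀ (c : ℝ), x0 ≤ c → 0 ≤ c → ∀ μ : ℝ, 0 ≤ μ → 1 ≤ L (Real.exp μ * c) := by
    intro c hc hc0 μ hμ
    apply hx0
    calc x0 ≤ c := hc
    _ = 1 * c := (one_mul c).symm
    _ ≤ Real.exp μ * c := mul_le_mul_of_nonneg_right (Real.one_le_exp hμ) hc0
  set cl : ℝ → ℝ := fun μ => max 0 (min μ (2*M)) with hcl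
  have hcl0 : ∀ μ, 0 ≤ cl μ := fun μ => le_max_left _ _
  have hcleq : ∀ μ ∈ Set.Icc (0:ℝ) (2*M), cl μ = μ := by
    intro μ hμ
    simp only [hcl, min_eq_left hμ.2, max_eq_right hμ.1]
  have hclcont : Continuous cl := continuous_const.max (continuous_id'.min continuous_const)
  -- the auxiliary function and its properties
  have haux : ∀ c : ℝ, x0 ≤ c → 1 ≤ c →
      Continuous (fun μ : ℝ => Real.log (L (Real.exp (cl μ) * c))) ∧
      (∀ μ : ℝ, 1 ≤ L (Real.exp (cl μ) * c)) := by
    intro c hc hc1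
    have h1 : ∀ μ : ℝ, 1 ≤ L (Real.exp (cl μ) * c) := fun μ =>
      hLge c hc (by linarith) (cl μ) (hcl0 μ)
    refine ⟨?_, h1⟩
    have hcont2 : Continuous (fun μ : ℝ => L (Real.exp (cl μ) * c)) := by
      apply hL.comp_continuous ((Real.continuous_exp.comp hclcont).mul continuous_const)
      intro μ
      have : 0 < Real.exp (cl μ) * c := mul_pos (Real.exp_pos _) (by linarith)
      exact this
    exact hcont2.log (fun μ => by linarith [h1 μ])
  set f : ℕ → ℝ → ℝ := fun n μ =>
    Real.log (L (Real.exp (cl μ) * X n)) - Real.log (L (X n)) with hf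
  set f' : ℕ → ℝ → ℝ := fun n μ =>
    Real.log (L (Real.exp (cl μ) * (Real.exp (μs n) * X n)))
      - Real.log (L (Real.exp (μs n) * X n)) with hf'
  have hY1 : ∀ n, (1:ℝ) ≤ Real.exp (μs n) * X n := fun n => by
    have := Real.one_le_exp (hμs n).1
    nlinarith [hX1 n]
  have hYx0 : ∀ n, x0 ≤ Real.exp (μs n) * X n := fun n =>
    le_trans (hXx0 n)
      (le_mul_of_one_le_left (by linarith [hX1 n]) (Real.one_le_exp (hμs n).1))
  -- strong measurability
  have hfm : ∀ n, StronglyMeasurable (f n) := fun n =>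
    (((haux (X n) (hXx0 n) (hX1 n)).1).sub continuous_const).stronglyMeasurable
  have hfm' : ∀ n, StronglyMeasurable (f' n) := fun n =>
    (((haux _ (hYx0 n) (hY1 n)).1).sub continuous_const).stronglyMeasurable
  -- pointwise convergence
  have hptwgen : ∀ (Y : ℕ → ℝ), Tendsto Y atTop atTop → (∀ n, x0 ≤ Y n) → (∀ n, (1:ℝ) ≤ Y n) →
      ∀ μ ∈ Set.Icc (0:ℝ) (2*M), Tendsto
        (fun n => Real.log (L (Real.exp (cl μ) * Y n)) - Real.log (L (Y n))) atTop (nhds 0) := by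
    intro Y hY hYa hYb μ hμ
    have h1 : Tendsto (fun n => L (Real.exp (cl μ) * Y n) / L (Y n)) atTop (nhds 1) :=
      (hLslow (Real.exp (cl μ)) (Real.exp_pos _)).comp hY
    have h2 := h1.log one_ne_zero
    rw [Real.log_one] at h2
    apply h2.congr
    intro n
    have e1 : (1:ℝ) ≤ L (Real.exp (cl μ) * Y n) :=
      hLge (Y n) (hYa n) (by linarith [hYb n]) (cl μ) (hcl0 μ)
    have e2 : (1:ℝ) ≤ L (Y n) := hx0 (Y n) (hYa n)
    show Real.log (L (Real.exp (cl μ) * Y n) / L (Y n)) = _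
    rw [Real.log_div (by linarith) (by linarith)]
  -- Egorov's theorem, twice
  have hsm : MeasurableSet (Set.Icc (0:ℝ) (2*M)) := measurableSet_Icc
  have hsfin : volume (Set.Icc (0:ℝ) (2*M)) ≠ ⊤ := measure_Icc_lt_top.ne
  obtain ⟨t1, ht1s, -, ht1m, hu1⟩ :=
    tendstoUniformlyOn_of_ae_tendsto hfm (stronglyMeasurable_const (b := (0:ℝ))) hsm hsfin
      (ae_of_all _ (fun μ hμ => hptwgen X hXtop hXx0 hX1 μ hμ))
      (show (0:ℝ) < M/8 by linarith)
  have hY'top : Tendsto (fun n => Real.exp (μs n) * X n) atTop atTop :=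
    tendsto_atTop_mono (fun n => le_mul_of_one_le_left (by linarith [hX1 n])
      (Real.one_le_exp (hμs n).1)) hXtop
  obtain ⟨t2, ht2s, -, ht2m, hu2⟩ :=
    tendstoUniformlyOn_of_ae_tendsto hfm' (stronglyMeasurable_const (b := (0:ℝ))) hsm hsfin
      (ae_of_all _ (fun μ hμ => hptwgen _ hY'top hYx0 hY1 μ hμ))
      (show (0:ℝ) < M/8 by linarith)
  -- pick an index where both uniform bounds hold
  have hcv1 := Metric.tendstoUniformlyOn_iff.mp hu1 (ε/2) (by linarith)
  have hcv2 := Metric.tendstoUniformlyOn_iff.mp hu2 (ε/2) (by linarith)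
  obtain ⟨n, hn1, hn2⟩ := (hcv1.and hcv2).exists
  have hν := hμs n
  -- find a good shift
  have hA : ∃ m ∈ Set.Icc (μs n) (μs n + M), m ∉ t1 ∧ m - μs n ∉ t2 := by
    by_contra hno
    push_neg at hno
    have hsub : Set.Icc (μs n) (μs n + M) ⊆ t1 ∪ ((fun m => -(μs n) + m) ⁻¹' t2) := by
      intro m hm
      by_cases h1 : m ∈ t1
      · exact Or.inl h1
      · exact Or.inr (by simpa [neg_add_eq_sub] using hno m hm h1)
    have hv : volume (Set.Icc (μs n) (μs n + M))
        ≤ volume t1 + volume ((fun m => -(μs n) + m) ⁻¹' t2) :=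
      le_trans (measure_mono hsub) (measure_union_le _ _)
    rw [measure_preimage_add, Real.volume_Icc, add_sub_cancel_left] at hv
    have h8 : ENNReal.ofReal M ≤ ENNReal.ofReal (M/8) + ENNReal.ofReal (M/8) :=
      hv.trans (add_le_add ht1m ht2m)
    rw [← ENNReal.ofReal_add (by linarith) (by linarith),
      ENNReal.ofReal_le_ofReal_iff (by linarith)] at h8
    linarith
  obtain ⟨m, hm, hm1, hm2⟩ := hA
  have hms : m ∈ Set.Icc (0:ℝ) (2*M) := ⟨by linarith [hν.1, hm.1], by linarith [hν.2, hm.2]⟩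
  have hms2 : m - μs n ∈ Set.Icc (0:ℝ) (2*M) := ⟨by linarith [hm.1], by linarith [hm.2, hν.1]⟩
  have b1 := hn1 m ⟨hms, hm1⟩
  have b2 := hn2 (m - μs n) ⟨hms2, hm2⟩
  rw [dist_comm, Real.dist_eq, sub_zero] at b1 b2
  have harg : Real.exp (cl (m - μs n)) * (Real.exp (μs n) * X n) = Real.exp m * X n := by
    rw [hcleq _ hms2, ← mul_assoc, ← Real.exp_add]
    congr 1
    · congr 1
      ring
  have hfn : f n m = Real.log (L (Real.exp m * X n)) - Real.log (L (X n)) := by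
    simp only [hf, hcleq _ hms]
  have hfn' : f' n (m - μs n)
      = Real.log (L (Real.exp m * X n)) - Real.log (L (Real.exp (μs n) * X n)) := by
    simp only [hf', harg]
  rw [hfn] at b1
  rw [hfn'] at b2
  have hb := hbad n
  set a := Real.log (L (Real.exp m * X n))
  set b := Real.log (L (Real.exp (μs n) * X n))
  set c := Real.log (L (X n))
  have t1' : |b - c| ≤ |b - a| + |a - c| := abs_sub_le b a c
  have t2' : |b - a| = |a - b| := abs_sub_comm _ _
  linarith [abs_nonneg (a - b)]

/-- UCT, log form, shifts in an arbitrary interval. -/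
lemma uctR (L : ℝ → ℝ) (hL : ContinuousOn L (Set.Ioi 0))
    (hLslow : ∀ t > (0 : ℝ), Tendsto (fun x => L (t * x) / L x) atTop (nhds 1))
    (hL1 : ∀ᶠ x in atTop, 1 ≤ L x)
    (a b : ℝ) (hab : a < b) (ε : ℝ) (hε : 0 < ε) :
    ∀ᶠ x in atTop, ∀ μ ∈ Set.Icc a b,
      |Real.log (L (Real.exp μ * x)) - Real.log (L x)| ≤ ε := by
  have hM : 0 < b - a := by linarith
  have h0 := uct0 L hL hLslow hL1 (b - a) hM (ε/2) (by linarith)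
  -- transfer to x ↦ exp a * x
  have htr : Tendsto (fun x : ℝ => Real.exp a * x) atTop atTop :=
    Tendsto.const_mul_atTop (Real.exp_pos a) tendsto_id
  have h1 : ∀ᶠ x in atTop, ∀ ν ∈ Set.Icc (0:ℝ) (b - a),
      |Real.log (L (Real.exp ν * (Real.exp a * x))) - Real.log (L (Real.exp a * x))| ≤ ε/2 :=
    htr.eventually h0
  -- pointwise control of the shift by a
  have h2 : Tendsto (fun x => L (Real.exp a * x) / L x) atTop (nhds 1) :=
    hLslow (Real.exp a) (Real.exp_pos a)
  have h3 := h2.log one_ne_zero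
  rw [Real.log_one] at h3
  have h4 : ∀ᶠ x in atTop, |Real.log (L (Real.exp a * x) / L x)| ≤ ε/2 := by
    have := Metric.tendsto_nhds.mp h3 (ε/2) (by linarith)
    filter_upwards [this] with x hx
    rw [Real.dist_eq, sub_zero] at hx
    exact hx.le
  have h5 : ∀ᶠ x in atTop, 1 ≤ L x := hL1
  have h6 : ∀ᶠ x in atTop, 1 ≤ L (Real.exp a * x) := htr.eventually hL1
  filter_upwards [h1, h4, h5, h6] with x hx1 hx4 hx5 hx6
  intro μ hμ
  have hν : μ - a ∈ Set.Icc (0:ℝ) (b - a) := ⟨by linarith [hμ.1], by linarith [hμ.2]⟩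
  have e1 := hx1 (μ - a) hν
  rw [← mul_assoc, ← Real.exp_add, sub_add_cancel] at e1
  rw [Real.log_div (by linarith) (by linarith)] at hx4
  calc |Real.log (L (Real.exp μ * x)) - Real.log (L x)|
      ≤ |Real.log (L (Real.exp μ * x)) - Real.log (L (Real.exp a * x))|
        + |Real.log (L (Real.exp a * x)) - Real.log (L x)| := abs_sub_le _ _ _
    _ ≤ ε/2 + ε/2 := add_le_add e1 hx4
    _ = ε := by ring

/-- UCT, ratio form. -/
lemma uct_ratio (L : ℝ → ℝ) (hL : ContinuousOn L (Set.Ioi 0))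
    (hLslow : ∀ t > (0 : ℝ), Tendsto (fun x => L (t * x) / L x) atTop (nhds 1))
    (hL1 : ∀ᶠ x in atTop, 1 ≤ L x)
    (a b : ℝ) (hab : a < b) (ε : ℝ) (hε : 0 < ε) :
    ∀ᶠ x in atTop, ∀ μ ∈ Set.Icc a b, |L (Real.exp μ * x) / L x - 1| ≤ ε := by
  have hε' : 0 < Real.log (1 + ε) := Real.log_pos (by linarith)
  have h0 := uctR L hL hLslow hL1 a b hab _ hε'
  obtain ⟨x0', hx0p⟩ := eventually_atTop.mp hL1
  set x0 := max x0' 1 with hx0def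
  have hx0 : ∀ u ≥ x0, 1 ≤ L u := fun u hu => hx0p u (le_trans (le_max_left _ _) hu)
  have hx01 : (1:ℝ) ≤ x0 := le_max_right _ _
  have h5 : ∀ᶠ x in atTop, 1 ≤ L x := hL1
  have h6 : ∀ᶠ x in atTop, x0 * Real.exp (-a) ≤ x := eventually_ge_atTop _
  have h7 : ∀ᶠ x in atTop, (0:ℝ) < x := eventually_gt_atTop 0
  filter_upwards [h0, h5, h6, h7] with x hx0' hx5 hx6 hx7
  intro μ hμ
  have hLx : (1:ℝ) ≤ L x := hx5
  have hLμ : (1:ℝ) ≤ L (Real.exp μ * x) := by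
    apply hx0
    have e1 : Real.exp (-a) * Real.exp μ = Real.exp (μ - a) := by
      rw [← Real.exp_add]; congr 1; ring
    have e2 : (1:ℝ) ≤ Real.exp (-a) * Real.exp μ := by
      rw [e1]; exact Real.one_le_exp (by linarith [hμ.1])
    nlinarith [mul_le_mul_of_nonneg_left hx6 (Real.exp_pos μ).le,
      mul_le_mul_of_nonneg_left e2 (show (0:ℝ) ≤ x0 by linarith)]
  have hR : (0:ℝ) < L (Real.exp μ * x) / L x := div_pos (by linarith) (by linarith)
  have hlogR : Real.log (L (Real.exp μ * x) / L x)
      = Real.log (L (Real.exp μ * x)) - Real.log (L x) :=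
    Real.log_div (by linarith) (by linarith)
  have habs := hx0' μ hμ
  rw [← hlogR] at habs
  set R := L (Real.exp μ * x) / L x
  have hub : R ≤ 1 + ε := by
    have : Real.log R ≤ Real.log (1 + ε) := by
      have := abs_le.mp habs; linarith [this.2]
    calc R = Real.exp (Real.log R) := (Real.exp_log hR).symm
      _ ≤ Real.exp (Real.log (1 + ε)) := Real.exp_le_exp.mpr this
      _ = 1 + ε := Real.exp_log (by linarith)
  have hlb : (1 + ε)⁻¹ ≤ R := by
    have h1 : -Real.log (1 + ε) ≤ Real.log R := by
      have := abs_le.mp habs; linarith [this.1]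
    calc (1 + ε)⁻¹ = Real.exp (-(Real.log (1 + ε))) := by
          rw [Real.exp_neg, Real.exp_log (by linarith)]
      _ ≤ Real.exp (Real.log R) := Real.exp_le_exp.mpr h1
      _ = R := Real.exp_log hR
  rw [abs_le]
  constructor
  · have h1 : 1 - ε ≤ (1 + ε)⁻¹ := by
      rw [inv_eq_one_div, le_div_iff₀ (by linarith : (0:ℝ) < 1 + ε)]
      nlinarith
    linarith
  · linarith

/-- The integral over a fixed window, normalized by `L x`, converges. -/
lemma windowC (α r : ℝ) (hα : 0 < α) (hr : 0 < r)
    (L : ℝ → ℝ) (hL : ContinuousOn L (Set.Ioi 0))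
    (hLslow : ∀ t > (0 : ℝ), Tendsto (fun x => L (t * x) / L x) atTop (nhds 1))
    (hL1 : ∀ᶠ x in atTop, 1 ≤ L x)
    (a b : ℝ) (hab : a < b) :
    Tendsto (fun x => (∫ s in a..b, L (Real.exp (r*s) * x) * Real.exp (-(α*(r*s)))) / L x)
      atTop (nhds (∫ s in a..b, Real.exp (-(α*(r*s))))) := by
  rw [Metric.tendsto_nhds]
  intro ε hε
  set W := Real.exp (-(α*(r*a))) with hWdef
  have hW : 0 < W := Real.exp_pos _
  set ε' := ε / ((b-a)*W + 1) with hε'def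
  have hden : (0:ℝ) < (b-a)*W + 1 := by nlinarith
  have hε' : 0 < ε' := div_pos hε hden
  have h0 := uct_ratio L hL hLslow hL1 (r*a) (r*b) (by nlinarith) ε' hε'
  filter_upwards [h0, hL1, eventually_gt_atTop 0] with x hx hx1 hxpos
  have hc1 : Continuous fun s : ℝ => L (Real.exp (r*s) * x) := by
    apply hL.comp_continuous
      ((Real.continuous_exp.comp (continuous_const.mul continuous_id')).mul continuous_const)
    exact fun s => mul_pos (Real.exp_pos _) hxpos
  have hc2 : Continuous fun s : ℝ => Real.exp (-(α*(r*s))) :=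
    Real.continuous_exp.comp (continuous_const.mul (continuous_const.mul continuous_id')).neg
  have hi1 : IntervalIntegrable
      (fun s => L (Real.exp (r*s)*x) * Real.exp (-(α*(r*s)))) volume a b :=
    (hc1.mul hc2).intervalIntegrable _ _
  have hi1' : IntervalIntegrable
      (fun s => L (Real.exp (r*s)*x) * Real.exp (-(α*(r*s))) / L x) volume a b :=
    hi1.div_const _
  have hi2 : IntervalIntegrable (fun s => Real.exp (-(α*(r*s)))) volume a b :=
    hc2.intervalIntegrable _ _
  rw [Real.dist_eq]
  have hrw : (∫ s in a..b, L (Real.exp (r*s) * x) * Real.exp (-(α*(r*s)))) / L x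
      - (∫ s in a..b, Real.exp (-(α*(r*s))))
      = ∫ s in a..b, (L (Real.exp (r*s) * x) / L x - 1) * Real.exp (-(α*(r*s))) := by
    rw [← intervalIntegral.integral_div, ← intervalIntegral.integral_sub hi1' hi2]
    apply intervalIntegral.integral_congr
    intro s _
    ring
  rw [hrw]
  have hbound : ∀ s ∈ Set.uIoc a b,
      ‖(L (Real.exp (r*s)*x)/L x - 1) * Real.exp (-(α*(r*s)))‖ ≤ ε' * W := by
    intro s hs
    rw [Set.uIoc_of_le hab.le] at hs
    have h1 : |L (Real.exp (r*s)*x)/L x - 1| ≤ ε' :=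
      hx (r*s) ⟨by nlinarith [mul_nonneg hr.le (sub_nonneg.2 hs.1.le)],
        by nlinarith [mul_nonneg hr.le (sub_nonneg.2 hs.2)]⟩
    have h2 : Real.exp (-(α*(r*s))) ≤ W := Real.exp_le_exp.mpr (by nlinarith [mul_nonneg (mul_pos hα hr).le (sub_nonneg.2 hs.1.le)])
    rw [norm_mul, Real.norm_eq_abs, Real.norm_eq_abs, abs_of_pos (Real.exp_pos _)]
    exact mul_le_mul h1 h2 (Real.exp_pos _).le hε'.le
  calc |∫ s in a..b, (L (Real.exp (r*s)*x)/L x - 1) * Real.exp (-(α*(r*s)))|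
      ≤ ε' * W * |b - a| := intervalIntegral.norm_integral_le_of_norm_le_const hbound
    _ < ε := by
        rw [abs_of_pos (by linarith : (0:ℝ) < b - a), hε'def, div_mul_eq_mul_div,
          div_mul_eq_mul_div, div_lt_iff₀ hden]
        nlinarith

/-- Lemma 3.3 of the paper: if `L` is continuous, slowly varying and
tends to `∞`, then `G(x) = (1/T) ∫_0^T L(e^{ry}x) (e^{ry}x)^{-α} dy` (the tail of the
discounted claim) is regularly varying at infinity with index `-α`: for every `t > 0`,
`G(tx)/G(x) → t^{-α}` as `x → ∞`. -/
theorem stmt_15 (α r T : ℝ) (hα : 0 < α) (hr : 0 < r) (hT : 0 < T)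
    (L : ℝ → ℝ) (hL : ContinuousOn L (Set.Ioi 0))
    (hLslow : ∀ t > (0 : ℝ), Tendsto (fun x => L (t * x) / L x) atTop (nhds 1))
    (hLtop : Tendsto L atTop atTop)
    (G : ℝ → ℝ)
    (hG : ∀ x, G x = (1 / T) * ∫ y in (0 : ℝ)..T,
      L (Real.exp (r * y) * x) * (Real.exp (r * y) * x) ^ (-α)) :
    ∀ t > (0 : ℝ), Tendsto (fun x => G (t * x) / G x) atTop (nhds (t ^ (-α))) := by
  intro t ht
  have hL1 : ∀ᶠ x in atTop, 1 ≤ L x := hLtop.eventually (eventually_ge_atTop 1)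
  set c := Real.log t / r with hc
  have hrc : r * c = Real.log t := by
    rw [hc, mul_div_assoc']; exact mul_div_cancel_left₀ _ hr.ne'
  have hexp_rc : Real.exp (r * c) = t := by rw [hrc, Real.exp_log ht]
  have hc2 : Continuous fun s : ℝ => Real.exp (-(α*(r*s))) :=
    Real.continuous_exp.comp (continuous_const.mul (continuous_const.mul continuous_id')).neg
  set C0 := ∫ s in (0:ℝ)..T, Real.exp (-(α*(r*s))) with hC0
  set C1 := ∫ s in c..(T+c), Real.exp (-(α*(r*s))) with hC1def
  have hC0pos : 0 < C0 :=
    intervalIntegral.intervalIntegral_pos_of_pos_on (hc2.intervalIntegrable _ _)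
      (fun s _ => Real.exp_pos _) hT
  have hW0 := windowC α r hα hr L hL hLslow hL1 0 T hT
  have hW1 := windowC α r hα hr L hL hLslow hL1 c (T+c) (by linarith)
  have hdiv := hW1.div hW0 hC0pos.ne'
  -- the limit value
  have hC1 : C1 = t ^ (-α) * C0 := by
    have h1 : C1 = ∫ y in (0:ℝ)..T, Real.exp (-(α*(r*(y+c)))) := by
      have h := intervalIntegral.integral_comp_add_right (a := (0:ℝ)) (b := T)
        (fun s => Real.exp (-(α*(r*s)))) c
      rw [zero_add] at h
      exact h.symm
    have h2 : ∀ y : ℝ, Real.exp (-(α*(r*(y+c)))) = Real.exp (-(α*(r*c))) * Real.exp (-(α*(r*y))) := by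
      intro y; rw [← Real.exp_add]; congr 1; ring
    have h3 : Real.exp (-(α*(r*c))) = t ^ (-α) := by
      rw [Real.rpow_def_of_pos ht]; congr 1; rw [← hrc]; ring
    rw [h1]
    simp only [h2, h3]
    rw [intervalIntegral.integral_const_mul]
  have hval : C1 / C0 = t ^ (-α) := by rw [hC1, mul_div_assoc, div_self hC0pos.ne', mul_one]
  rw [← hval]
  apply Tendsto.congr' _ hdiv
  filter_upwards [hL1, eventually_gt_atTop 0] with x hx1 hxpos
  have hLxne : L x ≠ 0 := by linarith
  have hxa : (0:ℝ) < x ^ (-α) := Real.rpow_pos_of_pos hxpos _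
  have hrpow : ∀ y : ℝ, (Real.exp (r*y) * x) ^ (-α)
      = Real.exp (-(α*(r*y))) * x ^ (-α) := by
    intro y
    rw [Real.mul_rpow (Real.exp_pos _).le hxpos.le, Real.rpow_def_of_pos (Real.exp_pos _),
      Real.log_exp]
    congr 2
    ring
  have hGx : G x = (1/T) * ((∫ s in (0:ℝ)..T,
      L (Real.exp (r*s)*x) * Real.exp (-(α*(r*s)))) * x ^ (-α)) := by
    rw [hG x, ← intervalIntegral.integral_mul_const]
    congr 1
    apply intervalIntegral.integral_congr
    intro y _
    simp only
    rw [hrpow y]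
    ring
  have hGtx : G (t*x) = (1/T) * ((∫ s in c..(T+c),
      L (Real.exp (r*s)*x) * Real.exp (-(α*(r*s)))) * x ^ (-α)) := by
    rw [hG (t*x)]
    congr 1
    have harg : ∀ y : ℝ, Real.exp (r*y) * (t*x) = Real.exp (r*(y+c)) * x := by
      intro y
      rw [mul_add, Real.exp_add, hexp_rc]
      ring
    calc (∫ y in (0:ℝ)..T, L (Real.exp (r*y) * (t*x)) * (Real.exp (r*y) * (t*x)) ^ (-α))
        = ∫ y in (0:ℝ)..T, (fun s => L (Real.exp (r*s)*x) * (Real.exp (r*s)*x) ^ (-α)) (y + c) := by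
          apply intervalIntegral.integral_congr
          intro y _
          simp only
          rw [harg y]
      _ = ∫ s in (0+c)..(T+c), L (Real.exp (r*s)*x) * (Real.exp (r*s)*x) ^ (-α) := by
          rw [intervalIntegral.integral_comp_add_right
            (fun s => L (Real.exp (r*s)*x) * (Real.exp (r*s)*x) ^ (-α)) c]
      _ = (∫ s in c..(T+c), L (Real.exp (r*s)*x) * Real.exp (-(α*(r*s)))) * x ^ (-α) := by
          rw [zero_add, ← intervalIntegral.integral_mul_const]
          apply intervalIntegral.integral_congr
          intro y _
          simp only
          rw [hrpow y]
          ring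
  have hkey : ∀ (p q l : ℝ), l ≠ 0 → (p/l)/(q/l) = p/q := by
    intro p q l hl
    rw [div_div_div_comm, div_self hl, div_one]
  simp only [Pi.div_apply]
  show _ = G (t*x) / G x
  rw [hGx, hGtx, mul_div_mul_left _ _ (one_div_ne_zero hT.ne'),
    mul_div_mul_right _ _ hxa.ne', hkey _ _ _ hLxne]
end
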